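/- arXiv:2302.03372 — 5 statements merged into one kernel-verified Lean document; each statement's English description precedes it below -/
import Mathlib

section
/- For all dimensions d ≥ 1 and all α ∈ (0,2), one has |A(d,α)·ω_{d-1}/(d(2-α)) − 1| ≤ C·log(1+d)·(2−α), where C is a constant independent of d and α. -/
/-!
With `s = 1 - α/2` and `x = d/2` the quantity is `(1 - s) Γ(x + 1 - s) / (4^s Γ(x + 1) Γ(1 + s))`.
Wendel's inequality `Γ(y + t) ≤ y^t Γ(y)`, a consequence of log-convexity, traps
`Γ(x + 1 - s) / Γ(x + 1)` between `(x + 1)^{-s}` and `x^{-s}`, while convexity of `Γ` keeps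
`Γ(1 + s)` in `[max (1 - 2s) (1/2), 1]`. Hence the quantity lies between
`1 - s (1 + log (2d + 4))` and `1 + 4s`, and `log (2d + 4) ≤ 3 log (1 + d)`.
-/

open Real

/-- `A(d, α)`, the normalising constant of the fractional Laplacian `(-Δ)^{α/2}` on `ℝ^d`. -/
noncomputable def fracLaplacianConst (d α : ℝ) : ℝ :=
  α * Gamma ((d + α) / 2) / ((2 : ℝ) ^ (2 - α) * π ^ (d / 2) * Gamma (1 - α / 2))

/-- `ω_{d-1}`. -/
noncomputable def unitSphereArea (d : ℝ) : ℝ :=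
  2 * π ^ (d / 2) / Gamma (d / 2)

namespace Real

theorem Gamma_one_add_le_one {s : ℝ} (h0 : 0 ≤ s) (h1 : s ≤ 1) : Gamma (1 + s) ≤ 1 := by
  have h := convexOn_Gamma.2 (x := 1) (y := 2) (Set.mem_Ioi.2 one_pos)
    (Set.mem_Ioi.2 two_pos) (sub_nonneg.2 h1) h0 (sub_add_cancel 1 s)
  have e : (1 - s) • (1 : ℝ) + s • (2 : ℝ) = 1 + s := by simp only [smul_eq_mul]; ring
  rw [e, smul_eq_mul, smul_eq_mul, Gamma_one, Gamma_two] at h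
  linarith

theorem one_sub_two_mul_le_Gamma_one_add {s : ℝ} (hs : 0 < s) : 1 - 2 * s ≤ Gamma (1 + s) := by
  have h := convexOn_Gamma.slope_mono_adjacent (x := 1 / 2) (y := 1) (z := 1 + s)
    (by norm_num) (by simp only [Set.mem_Ioi]; linarith) (by norm_num) (by linarith)
  rw [Gamma_one, Gamma_one_half_eq, add_sub_cancel_left, le_div_iff₀ hs] at h
  have : √π ≤ 2 := by
    rw [sqrt_le_left zero_le_two]; linarith [pi_le_four]
  norm_num at h
  nlinarith

/-- Convexity between `1 + s` and `2 - s`, whose midpoint is `3/2`, with `Γ(3/2) = √π / 2`. -/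
theorem sqrt_pi_sub_one_le_Gamma_one_add {s : ℝ} (h0 : 0 ≤ s) (h1 : s ≤ 1) :
    √π - 1 ≤ Gamma (1 + s) := by
  have h := convexOn_Gamma.2 (x := 1 + s) (y := 2 - s)
    (by simp only [Set.mem_Ioi]; linarith) (by simp only [Set.mem_Ioi]; linarith)
    (by norm_num : (0 : ℝ) ≤ 1 / 2) (by norm_num : (0 : ℝ) ≤ 1 / 2) (by norm_num)
  have e : (1 / 2 : ℝ) • (1 + s) + (1 / 2 : ℝ) • (2 - s) = 1 / 2 + 1 := by
    simp only [smul_eq_mul]; ring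
  rw [e, Gamma_add_one one_half_pos.ne', Gamma_one_half_eq, smul_eq_mul, smul_eq_mul] at h
  have := Gamma_one_add_le_one (s := 1 - s) (by linarith) (by linarith)
  rw [show 1 + (1 - s) = 2 - s by ring] at this
  linarith

theorem inv_Gamma_one_add_le {s : ℝ} (h0 : 0 < s) (h1 : s ≤ 1) :
    (Gamma (1 + s))⁻¹ ≤ 1 + 4 * s := by
  have hG : 1 / 2 ≤ Gamma (1 + s) := by
    have : 3 / 2 ≤ √π := by
      rw [le_sqrt (by norm_num) pi_pos.le]; linarith [pi_gt_three]
    linarith [sqrt_pi_sub_one_le_Gamma_one_add h0.le h1]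
  rw [inv_le_iff_one_le_mul₀ (by linarith)]
  nlinarith [one_sub_two_mul_le_Gamma_one_add h0]

/-- Wendel's inequality, from log-convexity on `[x, x + 1]` and `Γ(x + 1) = x Γ(x)`. -/
theorem Gamma_add_le_rpow_mul_Gamma {x t : ℝ} (hx : 0 < x) (ht0 : 0 < t) (ht1 : t < 1) :
    Gamma (x + t) ≤ x ^ t * Gamma x := by
  have h := Gamma_mul_add_mul_le_rpow_Gamma_mul_rpow_Gamma (s := x) (t := x + 1)
    (a := 1 - t) (b := t) hx (by linarith) (by linarith) ht0 (sub_add_cancel 1 t)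
  have hGx := Gamma_pos_of_pos hx
  calc Gamma (x + t) = Gamma ((1 - t) * x + t * (x + 1)) := by ring_nf
    _ ≤ Gamma x ^ (1 - t) * Gamma (x + 1) ^ t := h
    _ = x ^ t * (Gamma x ^ (1 - t) * Gamma x ^ t) := by
        rw [Gamma_add_one hx.ne', mul_rpow hx.le hGx.le]; ring
    _ = x ^ t * Gamma x := by rw [← rpow_add hGx, sub_add_cancel, rpow_one]

end Real

noncomputable def gammaRatio (x s : ℝ) : ℝ :=
  (1 - s) * Gamma (x + 1 - s) / ((4 : ℝ) ^ s * Gamma (x + 1) * Gamma (1 + s))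

section GammaRatio

variable {x s : ℝ}

theorem gammaRatio_le_one_add (hx : 1 / 4 ≤ x) (h0 : 0 < s) (h1 : s < 1) :
    gammaRatio x s ≤ 1 + 4 * s := by
  have hx0 : 0 < x := by linarith
  have hGs := Gamma_pos_of_pos (by linarith : 0 < 1 + s)
  have hGxs := Gamma_pos_of_pos (by linarith : 0 < x + 1 - s)
  have hpow : x ^ (1 - s) ≤ (4 : ℝ) ^ s * x := by
    have h4x : 1 ≤ (4 * x) ^ s := one_le_rpow (by linarith) h0.le
    rw [mul_rpow (by norm_num) hx0.le] at h4x
    rw [rpow_sub hx0, rpow_one, div_le_iff₀ (rpow_pos_of_pos hx0 s)]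
    nlinarith
  have hinv := (inv_le_iff_one_le_mul₀ hGs).1 (inv_Gamma_one_add_le h0 h1.le)
  rw [gammaRatio, div_le_iff₀ (by positivity)]
  calc (1 - s) * Gamma (x + 1 - s) ≤ Gamma (x + (1 - s)) := by
        rw [add_sub_assoc']; nlinarith
    _ ≤ x ^ (1 - s) * Gamma x := Gamma_add_le_rpow_mul_Gamma hx0 (by linarith) (by linarith)
    _ ≤ (4 : ℝ) ^ s * x * Gamma x := by gcongr
    _ ≤ (4 : ℝ) ^ s * Gamma (x + 1) * ((1 + 4 * s) * Gamma (1 + s)) := by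
        rw [Gamma_add_one hx0.ne', ← mul_assoc (4 ^ s)]
        exact le_mul_of_one_le_right (by positivity) hinv
    _ = (1 + 4 * s) * ((4 : ℝ) ^ s * Gamma (x + 1) * Gamma (1 + s)) := by ring

theorem one_sub_mul_le_gammaRatio (hx : 0 < x) (h0 : 0 < s) (h1 : s < 1) :
    1 - s * (1 + log (4 * (x + 1))) ≤ gammaRatio x s := by
  have hexp : 1 - s * log (4 * (x + 1)) ≤ ((4 : ℝ) ^ s * (x + 1) ^ s)⁻¹ := by
    rw [← mul_rpow (by norm_num) (by linarith), rpow_def_of_pos (by linarith), ← exp_neg]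
    linarith [add_one_le_exp (-(log (4 * (x + 1)) * s))]
  set L := log (4 * (x + 1))
  have hL : 0 ≤ L := log_nonneg (by linarith)
  have hGxs := Gamma_pos_of_pos (by linarith : 0 < x + 1 - s)
  have hwendel : Gamma (x + 1) ≤ (x + 1) ^ s * Gamma (x + 1 - s) := by
    calc Gamma (x + 1) = Gamma (x + 1 - s + s) := by ring_nf
      _ ≤ (x + 1 - s) ^ s * Gamma (x + 1 - s) :=
        Gamma_add_le_rpow_mul_Gamma (by linarith) h0 h1
      _ ≤ (x + 1) ^ s * Gamma (x + 1 - s) := by gcongr <;> linarith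
  have key : (1 - s * L) * ((4 : ℝ) ^ s * Gamma (x + 1) * Gamma (1 + s)) ≤ Gamma (x + 1 - s) := by
    calc (1 - s * L) * ((4 : ℝ) ^ s * Gamma (x + 1) * Gamma (1 + s))
        ≤ ((4 : ℝ) ^ s * (x + 1) ^ s)⁻¹ *
            ((4 : ℝ) ^ s * ((x + 1) ^ s * Gamma (x + 1 - s)) * 1) := by
          gcongr
          exact Gamma_one_add_le_one h0.le h1.le
      _ = Gamma (x + 1 - s) := by field_simp
  have hP : 0 ≤ (4 : ℝ) ^ s * Gamma (x + 1) * Gamma (1 + s) := by positivity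
  rw [gammaRatio, le_div_iff₀ (by positivity)]
  calc (1 - s * (1 + L)) * ((4 : ℝ) ^ s * Gamma (x + 1) * Gamma (1 + s))
      ≤ (1 - s) * ((1 - s * L) * ((4 : ℝ) ^ s * Gamma (x + 1) * Gamma (1 + s))) := by
        nlinarith [mul_nonneg (mul_nonneg (sq_nonneg s) hL) hP]
    _ ≤ (1 - s) * Gamma (x + 1 - s) := mul_le_mul_of_nonneg_left key (by linarith)

end GammaRatio

theorem fracLaplacianConst_mul_unitSphereArea_div_eq {d α x s : ℝ} (hd : d = 2 * x)
    (hα : α = 2 - 2 * s) (hx : 0 < x) (hs : 0 < s) :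
    fracLaplacianConst d α * unitSphereArea d / (d * (2 - α)) = gammaRatio x s := by
  subst hd hα
  have h4 : (2 : ℝ) ^ (2 - (2 - 2 * s)) = (4 : ℝ) ^ s := by
    rw [show 2 - (2 - 2 * s) = 2 * s by ring, rpow_mul zero_le_two]; norm_num
  simp only [fracLaplacianConst, unitSphereArea, gammaRatio, h4]
  rw [show (2 * x + (2 - 2 * s)) / 2 = x + 1 - s by ring, show 1 - (2 - 2 * s) / 2 = s by ring,
    show 2 * x / 2 = x by ring, show 2 - (2 - 2 * s) = 2 * s by ring, add_comm 1 s,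
    Gamma_add_one hx.ne', Gamma_add_one hs.ne']
  have hs' := hs.ne'
  field_simp

/-- Lemma `crate`: |A(d,α)·ω_{d-1}/(d(2-α)) − 1| ≤ C log(1+d)(2−α). -/
theorem stmt_0 :
    ∃ C : ℝ, 0 < C ∧ ∀ (d : ℕ), 1 ≤ d → ∀ α : ℝ, α ∈ Set.Ioo (0:ℝ) 2 →
      |(α * Real.Gamma (((d:ℝ) + α)/2) /
          ((2:ℝ) ^ (2 - α) * Real.pi ^ ((d:ℝ)/2) * Real.Gamma (1 - α/2))) *
        (2 * Real.pi ^ ((d:ℝ)/2) / Real.Gamma ((d:ℝ)/2)) / ((d:ℝ) * (2 - α)) - 1|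
        ≤ C * Real.log (1 + (d:ℝ)) * (2 - α) := by
  refine ⟨4, by norm_num, fun d hd α ⟨hα0, hα2⟩ => ?_⟩
  have hd1 : (1 : ℝ) ≤ d := by exact_mod_cast hd
  change |fracLaplacianConst d α * unitSphereArea d / (d * (2 - α)) - 1| ≤ _
  rw [fracLaplacianConst_mul_unitSphereArea_div_eq (x := d / 2) (s := 1 - α / 2) (by ring)
    (by ring) (by positivity) (by linarith)]
  have hlog : log (4 * (d / 2 + 1)) ≤ 3 * log (1 + d) := by
    have hcube : 4 * ((d : ℝ) / 2 + 1) ≤ (1 + d) ^ 3 := by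
      nlinarith [mul_le_mul hd1 hd1 zero_le_one (by positivity)]
    calc log (4 * (d / 2 + 1)) ≤ log ((1 + d) ^ 3) := log_le_log (by positivity) hcube
      _ = 3 * log (1 + d) := by rw [log_pow]; norm_num
  have hlog2 : 1 / 2 ≤ log (1 + d) := by
    linarith [log_two_gt_d9, log_le_log two_pos (by linarith : (2 : ℝ) ≤ 1 + d)]
  have hupper := gammaRatio_le_one_add (x := d / 2) (s := 1 - α / 2) (by linarith) (by linarith)
    (by linarith)
  have hlower := one_sub_mul_le_gammaRatio (x := d / 2) (s := 1 - α / 2) (by positivity)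
    (by linarith) (by linarith)
  rw [abs_sub_le_iff]
  constructor <;> nlinarith
end

section
/- The function φ(x) := (2x)^{−1/x}·Γ(1 − 1/x) is strictly decreasing on any interval [α_0, 2] with α_0 ∈ (1,2); more precisely, its derivative is bounded above by a negative constant depending only on α_0 on this interval. -/
open Real Set

/-!
Write `φ = exp g` with `g x = -log (2x) / x + log Γ(1 - 1/x)`, so that
`g' x = (log (2x) - 1 + ψ(1 - 1/x)) / x²`, where `ψ = (log ∘ Γ)'`.
Convexity of `log ∘ Γ` bounds `ψ t` by its slope over `[t, t + 1]`, which is `log t` by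
`Γ(t + 1) = t Γ(t)`; hence `log (2x) + ψ(1 - 1/x) ≤ log (2x - 2) ≤ log 2` and
`g' x ≤ (log 2 - 1) / 4` on `(1, 2]`. Since moreover `φ ≥ 1/4` there (`(2x)^(-1/x) ≥ 1/(2x)` and
`Γ ≥ 1` on `(0, 1]`), `φ' = φ g' ≤ (log 2 - 1) / 16 < 0`, uniformly on `(1, 2]`.
-/

lemma Real.differentiableAt_log_Gamma {t : ℝ} (ht : 0 < t) :
    DifferentiableAt ℝ (log ∘ Gamma) t :=
  (differentiableAt_Gamma fun m => ((neg_nonpos.mpr m.cast_nonneg).trans_lt ht).ne').log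
    (Gamma_pos_of_pos ht).ne'

lemma Real.deriv_log_Gamma_le_log {t : ℝ} (ht : 0 < t) : deriv (log ∘ Gamma) t ≤ log t := by
  refine (convexOn_log_Gamma.deriv_le_slope ht (by positivity : (0 : ℝ) < t + 1)
    (lt_add_one t) (differentiableAt_log_Gamma ht)).trans_eq ?_
  rw [slope_def_field, add_sub_cancel_left, div_one, Function.comp_apply, Function.comp_apply,
    Gamma_add_one ht.ne', log_mul ht.ne' (Gamma_pos_of_pos ht).ne', add_sub_cancel_right]

lemma Real.one_le_Gamma_of_le_one {t : ℝ} (ht : 0 < t) (ht1 : t ≤ 1) : 1 ≤ Gamma t :=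
  Gamma_one ▸ Gamma_strictAntiOn_Ioc.antitoneOn ⟨ht, ht1⟩ ⟨one_pos, le_rfl⟩ ht1

noncomputable def phi (x : ℝ) : ℝ := (2 * x) ^ (-1 / x) * Gamma (1 - 1 / x)

section

variable {x : ℝ}

lemma one_sub_one_div_pos (hx : 1 < x) : 0 < 1 - 1 / x :=
  sub_pos.2 ((div_lt_one (by linarith)).2 hx)

lemma phi_eq_exp (hx : 1 < x) :
    phi x = exp (-1 / x * log (2 * x) + log (Gamma (1 - 1 / x))) := by
  rw [phi, exp_add, exp_log (Gamma_pos_of_pos (one_sub_one_div_pos hx)),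
    rpow_def_of_pos (by linarith), mul_comm (log _)]

lemma hasDerivAt_phi_exponent (hx : 1 < x) :
    HasDerivAt (fun y => -1 / y * log (2 * y) + log (Gamma (1 - 1 / y)))
      ((log (2 * x) - 1 + deriv (log ∘ Gamma) (1 - 1 / x)) / x ^ 2) x := by
  have hx0 : x ≠ 0 := by positivity
  have h_inv : HasDerivAt (fun y => 1 / y) (-(x ^ 2)⁻¹) x := by
    simpa only [one_div] using hasDerivAt_inv hx0
  have h_log : HasDerivAt (fun y => log (2 * y)) x⁻¹ x := by
    convert ((hasDerivAt_id' x).const_mul 2).log (by positivity) using 1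
    field_simp
  have h_logGamma : HasDerivAt ((log ∘ Gamma) ∘ fun y => 1 - 1 / y)
      (deriv (log ∘ Gamma) (1 - 1 / x) * -(-(x ^ 2)⁻¹)) x :=
    (differentiableAt_log_Gamma (one_sub_one_div_pos hx)).hasDerivAt.comp x
      (h_inv.const_sub 1)
  have h_neg_inv : HasDerivAt (fun y => -1 / y) (x ^ 2)⁻¹ x := by
    simpa only [neg_div, neg_neg] using h_inv.fun_neg
  have h_first := h_neg_inv.fun_mul h_log
  refine (h_first.fun_add h_logGamma).congr_deriv ?_
  field_simp
  ring

lemma hasDerivAt_phi (hx : 1 < x) :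
    HasDerivAt phi
      (phi x * ((log (2 * x) - 1 + deriv (log ∘ Gamma) (1 - 1 / x)) / x ^ 2)) x := by
  rw [phi_eq_exp hx]
  refine (hasDerivAt_phi_exponent hx).exp.congr_of_eventuallyEq ?_
  filter_upwards [Ioi_mem_nhds hx] with y hy
  exact phi_eq_exp hy

lemma log_two_mul_add_deriv_log_Gamma_le (hx : 1 < x) (hx2 : x ≤ 2) :
    log (2 * x) + deriv (log ∘ Gamma) (1 - 1 / x) ≤ log 2 := by
  have ht := one_sub_one_div_pos hx
  calc log (2 * x) + deriv (log ∘ Gamma) (1 - 1 / x)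
      ≤ log (2 * x) + log (1 - 1 / x) := by gcongr; exact deriv_log_Gamma_le_log ht
    _ = log (2 * x - 2) := by
      rw [← log_mul (by positivity) ht.ne']
      congr 1
      field_simp
    _ ≤ log 2 := log_le_log (by linarith) (by linarith)

lemma quarter_le_phi (hx : 1 < x) (hx2 : x ≤ 2) : 1 / 4 ≤ phi x := by
  have h2x : 1 ≤ 2 * x := by linarith
  have h_rpow : 1 / 4 ≤ (2 * x) ^ (-1 / x) :=
    calc 1 / 4 ≤ (2 * x)⁻¹ := by rw [one_div]; gcongr; linarith
      _ = (2 * x) ^ (-1 : ℝ) := (rpow_neg_one _).symm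
      _ ≤ (2 * x) ^ (-1 / x) := by
        refine rpow_le_rpow_of_exponent_le h2x ?_
        rw [neg_div, neg_le_neg_iff, div_le_one (by linarith)]
        exact hx.le
  have h_Gamma : 1 ≤ Gamma (1 - 1 / x) :=
    one_le_Gamma_of_le_one (one_sub_one_div_pos hx) (sub_le_self _ (by positivity))
  calc 1 / 4 = 1 / 4 * 1 := (mul_one _).symm
    _ ≤ phi x := mul_le_mul h_rpow h_Gamma zero_le_one (by linarith)

lemma deriv_phi_le (hx : 1 < x) (hx2 : x ≤ 2) : deriv phi x ≤ (log 2 - 1) / 16 := by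
  have hlog2 : log 2 - 1 < 0 := by linarith [log_two_lt_d9]
  set N := log (2 * x) - 1 + deriv (log ∘ Gamma) (1 - 1 / x)
  have hN : N ≤ log 2 - 1 := by linarith [log_two_mul_add_deriv_log_Gamma_le hx hx2]
  have hNx : N / x ^ 2 ≤ (log 2 - 1) / 4 :=
    calc N / x ^ 2 ≤ (log 2 - 1) / x ^ 2 := by gcongr
      _ ≤ (log 2 - 1) / 4 := by
        rw [div_le_div_iff₀ (by positivity) (by norm_num)]
        exact mul_le_mul_of_nonpos_left (by nlinarith) hlog2.le
  rw [(hasDerivAt_phi hx).deriv]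
  calc phi x * (N / x ^ 2) ≤ 1 / 4 * (N / x ^ 2) :=
        mul_le_mul_of_nonpos_right (quarter_le_phi hx hx2) (by linarith)
    _ ≤ (log 2 - 1) / 16 := by linarith

end

/-- φ(x) = (2x)^{−1/x}Γ(1−1/x) is strictly decreasing on [α₀,2], with derivative
bounded above by a negative constant depending only on α₀. -/
theorem stmt_3 (α₀ : ℝ) (hα₀ : α₀ ∈ Set.Ioo (1:ℝ) 2) :
    StrictAntiOn (fun x : ℝ => (2*x) ^ (-1/x) * Real.Gamma (1 - 1/x)) (Set.Icc α₀ 2) ∧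
    ∃ c : ℝ, 0 < c ∧ ∀ x ∈ Set.Icc α₀ 2,
      deriv (fun x : ℝ => (2*x) ^ (-1/x) * Real.Gamma (1 - 1/x)) x ≤ -c := by
  change StrictAntiOn phi _ ∧ ∃ c : ℝ, 0 < c ∧ ∀ x ∈ Icc α₀ 2, deriv phi x ≤ -c
  have hlog2 : log 2 < 1 := by linarith [log_two_lt_d9]
  have h_one_lt : ∀ x ∈ Icc α₀ 2, 1 < x := fun x hx => hα₀.1.trans_le hx.1
  refine ⟨?_, (1 - log 2) / 16, by linarith, fun x hx => ?_⟩
  · refine strictAntiOn_of_deriv_neg (convex_Icc α₀ 2)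
      (fun x hx => (hasDerivAt_phi (h_one_lt x hx)).continuousAt.continuousWithinAt)
      fun x hx => ?_
    rw [interior_Icc] at hx
    exact (deriv_phi_le (hα₀.1.trans hx.1) hx.2.le).trans_lt (by linarith)
  · linarith [deriv_phi_le (h_one_lt x hx) hx.2]
end

section
/- Fix α_0 ∈ (1,2). There is a constant C depending only on α_0 such that for all α ∈ [α_0,2), ∫_0^1 [(2−α)s^{−1/α} + min((2−α)s^{−2/α}, s^{−1/α})] ds ≤ C·(2−α)·log(1/(2−α)). -/
open Real MeasureTheory intervalIntegral

set_option maxHeartbeats 1000000 in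

/-- ∫₀¹ [(2−α)s^{−1/α} + min((2−α)s^{−2/α}, s^{−1/α})] ds ≤ C(2−α)log(1/(2−α)). -/
theorem stmt_8 (α₀ : ℝ) (hα₀ : α₀ ∈ Set.Ioo (1:ℝ) 2) :
    ∃ C : ℝ, 0 < C ∧ ∀ α ∈ Set.Ico α₀ 2,
      (∫ s in (0:ℝ)..1, ((2-α) * s ^ (-1/α) + min ((2-α) * s ^ (-2/α)) (s ^ (-1/α))))
        ≤ C * (2-α) * Real.log (1/(2-α)) := by
  obtain ⟨hα₀1, hα₀2⟩ := hα₀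
  set c₀ : ℝ := -Real.log (2 - α₀) with hc₀def
  have hc₀ : 0 < c₀ := by
    have : Real.log (2 - α₀) < 0 := Real.log_neg (by linarith) (by linarith)
    simp only [hc₀def]; linarith
  set K : ℝ := α₀ / (α₀ - 1) with hKdef
  have hK : 0 < K := div_pos (by linarith) (by linarith)
  refine ⟨2 * Real.exp 1 + K * (1 + Real.exp 1) / c₀, by positivity, ?_⟩
  rintro α ⟨hαl, hαu⟩
  have hα1 : 1 < α := lt_of_lt_of_le hα₀1 hαl
  have hα0 : 0 < α := by linarith
  set x : ℝ := 2 - α with hxdef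
  have hx0 : 0 < x := by simp only [hxdef]; linarith
  have hx1 : x < 1 := by simp only [hxdef]; linarith
  set L : ℝ := Real.log (1 / x) with hLdef
  have hLlog : L = -Real.log x := by rw [hLdef, one_div, Real.log_inv]
  have hcL : c₀ ≤ L := by
    have h1 : Real.log x ≤ Real.log (2 - α₀) :=
      Real.log_le_log hx0 (by simp only [hxdef]; linarith)
    rw [hLlog, hc₀def]; linarith
  have hL0 : 0 < L := lt_of_lt_of_le hc₀ hcL
  have hxL1 : x * L ≤ 1 := by
    have h := Real.log_le_sub_one_of_pos (show (0:ℝ) < 1/x by positivity)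
    have h2 : x * L ≤ x * (1/x - 1) := by
      rw [hLdef]; exact mul_le_mul_of_nonneg_left h hx0.le
    rw [mul_sub, mul_one_div, div_self hx0.ne', mul_one] at h2
    linarith
  have hxL0 : 0 ≤ x * L := by positivity
  -- exponents
  have h1α : 1/α < 1 := by rw [div_lt_one hα0]; linarith
  have hp : (-1:ℝ) < -1/α := by rw [neg_div]; linarith
  -- basic integrability
  have i1 : IntervalIntegrable (fun s : ℝ => s ^ (-1/α)) volume 0 1 :=
    intervalIntegrable_rpow' hp
  have i1' : IntervalIntegrable (fun s : ℝ => x * s ^ (-1/α)) volume 0 1 :=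
    i1.const_mul _
  have hmeas : AEStronglyMeasurable
      (fun s : ℝ => min (x * s ^ (-2/α)) (s ^ (-1/α)))
      (volume.restrict (Set.uIoc (0:ℝ) 1)) := by
    apply Measurable.aestronglyMeasurable
    exact ((measurable_id.pow_const (-2/α)).const_mul _).min
      (measurable_id.pow_const (-1/α))
  have imin : IntervalIntegrable
      (fun s : ℝ => min (x * s ^ (-2/α)) (s ^ (-1/α))) volume 0 1 := by
    apply i1.mono_fun hmeas
    filter_upwards [ae_restrict_mem measurableSet_uIoc] with s hs
    rw [Set.uIoc_of_le (by norm_num : (0:ℝ) ≤ 1)] at hs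
    have hs0 : 0 < s := hs.1
    have h1 : 0 ≤ s ^ (-1/α) := (Real.rpow_pos_of_pos hs0 _).le
    have h2 : 0 ≤ x * s ^ (-2/α) := by
      have h3 := (Real.rpow_pos_of_pos hs0 (-2/α)).le
      positivity
    simp only [Real.norm_eq_abs]
    rw [abs_of_nonneg (le_min h2 h1), abs_of_nonneg h1]
    exact min_le_right _ _
  set β : ℝ := x ^ α with hβdef
  have hβ0 : 0 < β := Real.rpow_pos_of_pos hx0 α
  have hβ1 : β < 1 := Real.rpow_lt_one hx0.le hx1 hα0
  have hsub1 : Set.uIoc (0:ℝ) β ⊆ Set.uIoc (0:ℝ) 1 := by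
    rw [Set.uIoc_of_le hβ0.le, Set.uIoc_of_le (by norm_num : (0:ℝ) ≤ 1)]
    exact Set.Ioc_subset_Ioc le_rfl hβ1.le
  have hsub2 : Set.uIoc β (1:ℝ) ⊆ Set.uIoc (0:ℝ) 1 := by
    rw [Set.uIoc_of_le hβ1.le, Set.uIoc_of_le (by norm_num : (0:ℝ) ≤ 1)]
    exact Set.Ioc_subset_Ioc hβ0.le le_rfl
  have iminβ := imin.mono_set' hsub1
  have imin1 := imin.mono_set' hsub2
  have i1β := i1.mono_set' hsub1
  have i2 : IntervalIntegrable (fun s : ℝ => x * s ^ (-2/α)) volume β 1 :=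
    (intervalIntegrable_rpow (Or.inr (Set.notMem_uIcc_of_lt hβ0 one_pos))).const_mul _
  -- split the integral
  rw [intervalIntegral.integral_add i1' imin]
  have hsplit : (∫ s in (0:ℝ)..1, min (x * s ^ (-2/α)) (s ^ (-1/α)))
      = (∫ s in (0:ℝ)..β, min (x * s ^ (-2/α)) (s ^ (-1/α)))
        + ∫ s in β..(1:ℝ), min (x * s ^ (-2/α)) (s ^ (-1/α)) :=
    (integral_add_adjacent_intervals iminβ imin1).symm
  rw [hsplit]
  -- bound the two min pieces
  have hb1 : (∫ s in (0:ℝ)..β, min (x * s ^ (-2/α)) (s ^ (-1/α)))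
      ≤ ∫ s in (0:ℝ)..β, s ^ (-1/α) :=
    integral_mono_on hβ0.le iminβ i1β (fun s _ => min_le_right _ _)
  have hb2 : (∫ s in β..(1:ℝ), min (x * s ^ (-2/α)) (s ^ (-1/α)))
      ≤ ∫ s in β..(1:ℝ), x * s ^ (-2/α) :=
    integral_mono_on hβ1.le imin1 i2 (fun s _ => min_le_left _ _)
  -- compute the three integrals
  have hr1 : -1/α + 1 = (α - 1)/α := by field_simp; ring
  have hr1pos : (0:ℝ) < (α-1)/α := div_pos (by linarith) hα0
  -- exponential form
  set E : ℝ := Real.exp (x * L) with hEdef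
  have hE0 : 0 < E := Real.exp_pos _
  have hE1 : 1 ≤ E := by rw [hEdef, ← Real.exp_zero]; exact Real.exp_le_exp.2 hxL0
  have hEe : E ≤ Real.exp 1 := Real.exp_le_exp.2 hxL1
  have hxE : x ^ (α - 2) = E := by
    rw [Real.rpow_def_of_pos hx0, hEdef]
    congr 1
    have : Real.log x = -L := by rw [hLlog]; ring
    rw [this, hxdef]; ring
  have hβ2 : β ^ ((α-2)/α) = E := by
    rw [hβdef, ← Real.rpow_mul hx0.le, show α * ((α-2)/α) = α - 2 by field_simp, hxE]
  have hβ1pow : β ^ ((α-1)/α) = x * E := by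
    rw [hβdef, ← Real.rpow_mul hx0.le, show α * ((α-1)/α) = α - 1 by field_simp]
    rw [show α - 1 = (α - 2) + 1 by ring, Real.rpow_add hx0, hxE, Real.rpow_one]
    ring
  have hA : (∫ s in (0:ℝ)..1, s ^ (-1/α)) = 1 / ((α-1)/α) := by
    rw [integral_rpow (Or.inl hp), hr1, Real.one_rpow,
      Real.zero_rpow hr1pos.ne', sub_zero]
  have hB : (∫ s in (0:ℝ)..β, s ^ (-1/α)) = (x * E) / ((α-1)/α) := by
    rw [integral_rpow (Or.inl hp), hr1, Real.zero_rpow hr1pos.ne', sub_zero, hβ1pow]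
  have hq : -2/α + 1 = (α - 2)/α := by field_simp; ring
  have hD : (∫ s in β..(1:ℝ), x * s ^ (-2/α)) = α * (E - 1) := by
    rw [intervalIntegral.integral_const_mul,
      integral_rpow (Or.inr ⟨by intro h; rw [div_eq_iff hα0.ne'] at h; linarith,
        Set.notMem_uIcc_of_lt hβ0 one_pos⟩), hq, Real.one_rpow, hβ2]
    have hα2 : α - 2 ≠ 0 := by linarith
    rw [hxdef]
    field_simp
    ring
  rw [intervalIntegral.integral_const_mul, hA]
  -- final arithmetic
  have hA1 : 1 / ((α-1)/α) = α / (α-1) := one_div_div _ _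
  have hKA : α / (α - 1) ≤ K := by
    rw [hKdef, div_le_div_iff₀ (by linarith) (by linarith)]
    nlinarith [mul_le_mul_of_nonneg_right hαl (show (0:ℝ) ≤ 1 by norm_num)]
  have hE2 : E - 1 ≤ x * L * E := by
    have h3 := Real.add_one_le_exp (-(x*L))
    have h4 : Real.exp (-(x*L)) * E = 1 := by
      rw [hEdef, ← Real.exp_add]; simp
    have h5 := mul_le_mul_of_nonneg_right h3 hE0.le
    rw [h4] at h5
    nlinarith [h5]
  have t1 : x * (1 / ((α-1)/α)) ≤ K * (x * L) / c₀ := by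
    rw [hA1, le_div_iff₀ hc₀]
    have p0 : x * (α/(α-1)) ≤ x * K := mul_le_mul_of_nonneg_left hKA hx0.le
    calc x * (α/(α-1)) * c₀ ≤ x * K * c₀ := mul_le_mul_of_nonneg_right p0 hc₀.le
      _ ≤ x * K * L := mul_le_mul_of_nonneg_left hcL (by positivity)
      _ = K * (x * L) := by ring
  have t2 : (x * E) / ((α-1)/α) ≤ K * Real.exp 1 * (x * L) / c₀ := by
    have h5 : (x * E) / ((α-1)/α) = (x * E) * (α/(α-1)) := by
      rw [div_eq_mul_inv, ← one_div, hA1]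
    rw [h5, le_div_iff₀ hc₀]
    have p0 : x * E * (α/(α-1)) ≤ x * E * K :=
      mul_le_mul_of_nonneg_left hKA (by positivity)
    have p0' : x * K * E ≤ x * K * Real.exp 1 :=
      mul_le_mul_of_nonneg_left hEe (by positivity)
    calc x * E * (α/(α-1)) * c₀ ≤ x * E * K * c₀ :=
          mul_le_mul_of_nonneg_right p0 hc₀.le
      _ = x * K * E * c₀ := by ring
      _ ≤ x * K * Real.exp 1 * c₀ := mul_le_mul_of_nonneg_right p0' hc₀.le
      _ ≤ x * K * Real.exp 1 * L := mul_le_mul_of_nonneg_left hcL (by positivity)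
      _ = K * Real.exp 1 * (x * L) := by ring
  have t3 : α * (E - 1) ≤ 2 * Real.exp 1 * (x * L) := by
    have h7 : 0 ≤ (2 - α) * (E - 1) := mul_nonneg (by linarith) (by linarith)
    have h9 : α * (E - 1) ≤ 2 * (E - 1) := by nlinarith [h7]
    have h8 : x * L * E ≤ x * L * Real.exp 1 := mul_le_mul_of_nonneg_left hEe hxL0
    linarith [h9, hE2, h8]
  have hfin : (2 * Real.exp 1 + K * (1 + Real.exp 1) / c₀) * x * L
      = 2 * Real.exp 1 * (x*L) + (K * (x*L) / c₀ + K * Real.exp 1 * (x*L) / c₀) := by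
    field_simp
  rw [hfin]
  rw [hB] at hb1
  rw [hD] at hb2
  have final := add_le_add t1 (add_le_add (hb1.trans t2) (hb2.trans t3))
  exact final.trans (le_of_eq (by ring))
end

section
/- Fix α_0 ∈ (1,2). For all α ∈ [α_0, 2), A(d,α)·ω_{d−1}/(α−1) ≤ C_{α_0}·d·log(1+d)·(2−α) and A(d,α)·ω_{d−1}/(2−α) ≤ C_{α_0}·d·log(1+d), where C_{α_0} depends only on α_0. -/
open Real

private lemma gamma_le_max {x y z : ℝ} (hx : 0 < x) (hy : 0 < y) (hxy : x ≤ y)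
    (hz : z ∈ Set.Icc x y) : Real.Gamma z ≤ max (Real.Gamma x) (Real.Gamma y) :=
  Real.convexOn_Gamma.le_on_segment hx hy (by rwa [segment_eq_Icc hxy])

set_option maxHeartbeats 1000000 in
/-- Bounds A(d,α)ω_{d−1}/(α−1) ≤ C_{α₀} d log(1+d)(2−α) and
A(d,α)ω_{d−1}/(2−α) ≤ C_{α₀} d log(1+d) for α ∈ [α₀,2). -/
theorem stmt_18 (α₀ : ℝ) (hα₀ : α₀ ∈ Set.Ioo (1:ℝ) 2) :
    ∃ C : ℝ, 0 < C ∧ ∀ (d : ℕ), 1 ≤ d → ∀ α ∈ Set.Ico α₀ 2,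
      (α * Real.Gamma (((d:ℝ) + α)/2) /
          ((2:ℝ) ^ (2 - α) * Real.pi ^ ((d:ℝ)/2) * Real.Gamma (1 - α/2))) *
        (2 * Real.pi ^ ((d:ℝ)/2) / Real.Gamma ((d:ℝ)/2)) / (α - 1)
        ≤ C * (d:ℝ) * Real.log (1 + (d:ℝ)) * (2 - α) ∧
      (α * Real.Gamma (((d:ℝ) + α)/2) /
          ((2:ℝ) ^ (2 - α) * Real.pi ^ ((d:ℝ)/2) * Real.Gamma (1 - α/2))) *
        (2 * Real.pi ^ ((d:ℝ)/2) / Real.Gamma ((d:ℝ)/2)) / (2 - α)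
        ≤ C * (d:ℝ) * Real.log (1 + (d:ℝ)) := by
  obtain ⟨hα₀1, hα₀2⟩ := hα₀
  have hlog2 : (0:ℝ) < Real.log 2 := Real.log_pos (by norm_num)
  have hsπ : (0:ℝ) < Real.sqrt π := Real.sqrt_pos.mpr Real.pi_pos
  refine ⟨2 * Real.sqrt π / ((α₀ - 1) * Real.log 2),
    div_pos (by positivity) (mul_pos (by linarith) hlog2), ?_⟩
  intro d hd α hα
  obtain ⟨hα1, hα2⟩ := hα
  have hα1' : 1 < α := lt_of_lt_of_le hα₀1 hα1
  have h2α : (0:ℝ) < 2 - α := by linarith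
  have h2αne : (2:ℝ) - α ≠ 0 := ne_of_gt h2α
  have hdR : (1:ℝ) ≤ (d:ℝ) := by exact_mod_cast hd
  have hdpos : (0:ℝ) < (d:ℝ) := by linarith
  set Γd' := Real.Gamma (((d:ℝ) + α)/2) with hΓd'def
  set Γ1 := Real.Gamma (1 - α/2) with hΓ1def
  set Γd := Real.Gamma ((d:ℝ)/2) with hΓddef
  have hΓdpos : 0 < Γd := Real.Gamma_pos_of_pos (by positivity)
  have hΓ1pos : 0 < Γ1 := Real.Gamma_pos_of_pos (by linarith)
  have hΓd'pos : 0 < Γd' := Real.Gamma_pos_of_pos (by positivity)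
  have hPpos : (0:ℝ) < Real.pi ^ ((d:ℝ)/2) := Real.rpow_pos_of_pos Real.pi_pos _
  have h2pow : (1:ℝ) ≤ (2:ℝ) ^ (2 - α) := Real.one_le_rpow (by norm_num) (by linarith)
  have h2powpos : (0:ℝ) < (2:ℝ) ^ (2 - α) := Real.rpow_pos_of_pos (by norm_num) _
  -- bound on Γ(α/2)
  have honesπ : (1:ℝ) ≤ Real.sqrt π := by
    rw [show (1:ℝ) = Real.sqrt 1 by simp]
    exact Real.sqrt_le_sqrt (by linarith [Real.pi_gt_three])
  have hΓα2 : Real.Gamma (α/2) ≤ Real.sqrt π := by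
    have h := gamma_le_max (x := 1/2) (y := 1) (z := α/2) (by norm_num) (by norm_num)
      (by norm_num) ⟨by linarith, by linarith⟩
    rw [Real.Gamma_one_half_eq, Real.Gamma_one] at h
    calc Real.Gamma (α/2) ≤ max (Real.sqrt π) 1 := h
      _ = Real.sqrt π := max_eq_left honesπ
  have hΓα2pos : 0 < Real.Gamma (α/2) := Real.Gamma_pos_of_pos (by linarith)
  -- lower bound on Γ(1-α/2) via reflection
  have hsin : Real.sin (π * (α/2)) ≤ π * (2 - α) / 2 := by
    have h1 : Real.sin (π * (α/2)) = Real.sin (π * (2 - α) / 2) := by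
      rw [show π * (2 - α) / 2 = π - π * (α/2) by ring, Real.sin_pi_sub]
    rw [h1]
    exact Real.sin_le (by nlinarith [Real.pi_pos])
  have hsinpos : 0 < Real.sin (π * (α/2)) := by
    apply Real.sin_pos_of_pos_of_lt_pi
    · nlinarith [Real.pi_pos]
    · nlinarith [Real.pi_pos]
  have hrefl : Real.Gamma (α/2) * Γ1 * Real.sin (π * (α/2)) = π := by
    have h := Real.Gamma_mul_Gamma_one_sub (α/2)
    rw [hΓ1def]
    rw [h, div_mul_cancel₀ _ hsinpos.ne']
  have hΓ1lb : 2 / ((2 - α) * Real.sqrt π) ≤ Γ1 := by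
    rw [div_le_iff₀ (mul_pos h2α hsπ)]
    have hprod : Real.sin (π * (α/2)) * Real.Gamma (α/2) ≤
        (π * (2 - α) / 2) * Real.sqrt π :=
      mul_le_mul hsin hΓα2 hΓα2pos.le (by nlinarith [Real.pi_pos])
    have hπsq : Real.sqrt π * Real.sqrt π = π := Real.mul_self_sqrt Real.pi_pos.le
    nlinarith [hrefl, mul_le_mul_of_nonneg_left hprod hΓ1pos.le, Real.pi_pos,
      mul_pos hΓ1pos hsπ]
  -- upper bound on Γ((d+α)/2)
  have hΓd'ub : Γd' ≤ (d:ℝ) * Γd := by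
    have h := gamma_le_max (x := (d:ℝ)/2) (y := (d:ℝ)/2 + 1) (z := ((d:ℝ) + α)/2)
      (by positivity) (by positivity) (by linarith) ⟨by linarith, by linarith⟩
    have hadd : Real.Gamma ((d:ℝ)/2 + 1) = ((d:ℝ)/2) * Γd :=
      Real.Gamma_add_one (by positivity)
    rw [hadd] at h
    calc Γd' ≤ max Γd ((d:ℝ)/2 * Γd) := h
      _ ≤ (d:ℝ) * Γd := max_le (by nlinarith) (by nlinarith)
  -- key bound
  have hEeq : (α * Γd' / ((2:ℝ) ^ (2 - α) * Real.pi ^ ((d:ℝ)/2) * Γ1)) *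
      (2 * Real.pi ^ ((d:ℝ)/2) / Γd)
      = 2 * α * Γd' / ((2:ℝ) ^ (2 - α) * Γ1 * Γd) := by
    field_simp
  have hkey : (α * Γd' / ((2:ℝ) ^ (2 - α) * Real.pi ^ ((d:ℝ)/2) * Γ1)) *
      (2 * Real.pi ^ ((d:ℝ)/2) / Γd) ≤ 2 * Real.sqrt π * (d:ℝ) * (2 - α) := by
    rw [hEeq]
    have hnum : 2 * α * Γd' ≤ 4 * ((d:ℝ) * Γd) := by nlinarith
    have hden : 2 * Γd / ((2 - α) * Real.sqrt π) ≤ (2:ℝ) ^ (2 - α) * Γ1 * Γd := by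
      have h1 : 2 / ((2 - α) * Real.sqrt π) * Γd ≤ Γ1 * Γd :=
        mul_le_mul_of_nonneg_right hΓ1lb hΓdpos.le
      have h2 : Γ1 * Γd ≤ (2:ℝ) ^ (2 - α) * (Γ1 * Γd) := by
        nlinarith [mul_pos hΓ1pos hΓdpos]
      calc 2 * Γd / ((2 - α) * Real.sqrt π)
          = 2 / ((2 - α) * Real.sqrt π) * Γd := by ring
        _ ≤ Γ1 * Γd := h1
        _ ≤ (2:ℝ) ^ (2 - α) * (Γ1 * Γd) := h2
        _ = (2:ℝ) ^ (2 - α) * Γ1 * Γd := by ring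
    have hdenpos : (0:ℝ) < 2 * Γd / ((2 - α) * Real.sqrt π) :=
      div_pos (by linarith) (mul_pos h2α hsπ)
    calc 2 * α * Γd' / ((2:ℝ) ^ (2 - α) * Γ1 * Γd)
        ≤ 4 * ((d:ℝ) * Γd) / (2 * Γd / ((2 - α) * Real.sqrt π)) :=
          div_le_div₀ (by positivity) hnum hdenpos hden
      _ = 2 * Real.sqrt π * (d:ℝ) * (2 - α) := by
          rw [div_div_eq_mul_div]
          field_simp [hΓdpos.ne']
          ring
  have hEnonneg : 0 ≤ (α * Γd' / ((2:ℝ) ^ (2 - α) * Real.pi ^ ((d:ℝ)/2) * Γ1)) *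
      (2 * Real.pi ^ ((d:ℝ)/2) / Γd) := by positivity
  have hlog : Real.log 2 ≤ Real.log (1 + (d:ℝ)) :=
    Real.log_le_log (by norm_num) (by linarith)
  set C := 2 * Real.sqrt π / ((α₀ - 1) * Real.log 2) with hCdef
  have hCpos : 0 < C := div_pos (by positivity) (mul_pos (by linarith) hlog2)
  have hClog2 : C * Real.log 2 = 2 * Real.sqrt π / (α₀ - 1) := by
    rw [hCdef, div_mul_eq_mul_div, mul_comm (α₀ - 1) (Real.log 2), ← div_div,
      mul_div_assoc, div_self hlog2.ne', mul_one]
  constructor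
  · calc (α * Γd' / ((2:ℝ) ^ (2 - α) * Real.pi ^ ((d:ℝ)/2) * Γ1)) *
        (2 * Real.pi ^ ((d:ℝ)/2) / Γd) / (α - 1)
        ≤ 2 * Real.sqrt π * (d:ℝ) * (2 - α) / (α₀ - 1) :=
          div_le_div₀ (by positivity) hkey (by linarith) (by linarith)
      _ = C * (d:ℝ) * Real.log 2 * (2 - α) := by
          rw [show C * (d:ℝ) * Real.log 2 * (2 - α)
            = C * Real.log 2 * ((d:ℝ) * (2 - α)) by ring, hClog2]
          field_simp
      _ ≤ C * (d:ℝ) * Real.log (1 + (d:ℝ)) * (2 - α) := by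
          have h := mul_le_mul_of_nonneg_left hlog
            (mul_nonneg hCpos.le hdpos.le)
          nlinarith [h]
  · calc (α * Γd' / ((2:ℝ) ^ (2 - α) * Real.pi ^ ((d:ℝ)/2) * Γ1)) *
        (2 * Real.pi ^ ((d:ℝ)/2) / Γd) / (2 - α)
        ≤ 2 * Real.sqrt π * (d:ℝ) * (2 - α) / (2 - α) :=
          div_le_div₀ (by positivity) hkey h2α le_rfl
      _ = 2 * Real.sqrt π * (d:ℝ) := by
          rw [mul_div_assoc, div_self h2αne, mul_one]
      _ ≤ C * (d:ℝ) * Real.log (1 + (d:ℝ)) := by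
          have hC2 : 2 * Real.sqrt π ≤ C * Real.log 2 := by
            rw [hClog2, le_div_iff₀ (by linarith)]
            nlinarith
          have h3 : C * Real.log 2 ≤ C * Real.log (1 + (d:ℝ)) :=
            mul_le_mul_of_nonneg_left hlog hCpos.le
          nlinarith [hC2, h3, hdpos]
end

section
/- Let ψ = Γ'/Γ be the digamma function and d ≥ 1. Then for all x ∈ [0,2], the derivative of ρ(x) := x·Γ((d+x)/2) − d·2^{2−x}·Γ(2−x/2)·Γ(d/2) satisfies |ρ'(x)| ≤ C·d·Γ(d/2)·log(1+d) for a constant C independent of d. -/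
/-!
Write `ψ = Γ'/Γ = logDeriv Γ`. Since `log Γ` is convex on `(0, ∞)` and
`log Γ (t + 1) - log Γ t = log t`, comparing `ψ` at `t` and at `t + 1` with the slope of `log Γ`
over `[t, t + 1]`, and using `ψ (t + 1) = ψ t + 1/t`, gives `log t - 1/t ≤ ψ t ≤ log t`.
Now `ρ'(x) = Γ(z) + (x/2) Γ'(z) + d Γ(d/2) 2^{2-x} (log 2 · Γ(w) + Γ'(w)/2)` with
`z = (d + x)/2 ∈ [d/2, d/2 + 1]` and `w = 2 - x/2 ∈ [1, 2]`. Convexity of `Γ` bounds `Γ(z)` by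
`d Γ(d/2)` and `Γ(w)` by `1`, so the bounds on `ψ` give `|Γ'(z)| ≤ 4 d Γ(d/2) log(1 + d)` and
`|Γ'(w)| ≤ 2`.
-/

open Real Set

namespace Real

lemma differentiableAt_Gamma_of_pos {t : ℝ} (ht : 0 < t) : DifferentiableAt ℝ Gamma t :=
  differentiableAt_Gamma fun m => ((neg_nonpos.2 m.cast_nonneg).trans_lt ht).ne'

lemma Gamma_le_max_of_mem_Icc {a b t : ℝ} (ha : 0 < a) (ht : t ∈ Icc a b) :
    Gamma t ≤ max (Gamma a) (Gamma b) :=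
  convexOn_Gamma.le_on_segment ha (ha.trans_le (ht.1.trans ht.2))
    (by rwa [segment_eq_Icc (ht.1.trans ht.2)])

lemma Gamma_le_one_of_mem_Icc {t : ℝ} (ht : t ∈ Icc 1 2) : Gamma t ≤ 1 := by
  simpa [Gamma_one, Gamma_two] using Gamma_le_max_of_mem_Icc one_pos ht

lemma Gamma_le_mul_Gamma_half {d t : ℝ} (hd : 1 ≤ d) (ht : t ∈ Icc (d / 2) (d / 2 + 1)) :
    Gamma t ≤ d * Gamma (d / 2) := by
  have hΓ := Gamma_pos_of_pos (by linarith : 0 < d / 2)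
  refine (Gamma_le_max_of_mem_Icc (by linarith) ht).trans (max_le (by nlinarith) ?_)
  rw [Gamma_add_one (by linarith)]
  nlinarith

lemma log_Gamma_add_one_sub_log_Gamma {t : ℝ} (ht : 0 < t) :
    log (Gamma (t + 1)) - log (Gamma t) = log t := by
  rw [Gamma_add_one ht.ne', log_mul ht.ne' (Gamma_pos_of_pos ht).ne']
  ring

lemma differentiableAt_log_Gamma_s19 {t : ℝ} (ht : 0 < t) : DifferentiableAt ℝ (log ∘ Gamma) t :=
  (differentiableAt_Gamma_of_pos ht).log (Gamma_pos_of_pos ht).ne'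

lemma deriv_log_Gamma {t : ℝ} (ht : 0 < t) : deriv (log ∘ Gamma) t = logDeriv Gamma t :=
  deriv_log_comp_eq_logDeriv (differentiableAt_Gamma_of_pos ht) (Gamma_pos_of_pos ht).ne'

lemma logDeriv_Gamma_add_one {t : ℝ} (ht : 0 < t) :
    logDeriv Gamma (t + 1) = logDeriv Gamma t + t⁻¹ := by
  have hΓ := Gamma_pos_of_pos ht
  have hshift : (fun s => Gamma (s + 1)) =ᶠ[nhds t] fun s => s * Gamma s := by
    filter_upwards [lt_mem_nhds ht] with s hs using Gamma_add_one hs.ne'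
  have hderiv : deriv Gamma (t + 1) = Gamma t + t * deriv Gamma t := by
    rw [← deriv_comp_add_const, hshift.deriv_eq]
    simpa using ((hasDerivAt_id' t).fun_mul (differentiableAt_Gamma_of_pos ht).hasDerivAt).deriv
  rw [logDeriv_apply, logDeriv_apply, hderiv, Gamma_add_one ht.ne']
  field_simp
  ring

lemma logDeriv_Gamma_le_log {t : ℝ} (ht : 0 < t) : logDeriv Gamma t ≤ log t := by
  have ht1 : 0 < t + 1 := by linarith
  have h := convexOn_log_Gamma.deriv_le_slope ht ht1 (lt_add_one t)
    (differentiableAt_log_Gamma_s19 ht)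
  rwa [deriv_log_Gamma ht, slope_def_field, add_sub_cancel_left, div_one, Function.comp_apply,
    Function.comp_apply, log_Gamma_add_one_sub_log_Gamma ht] at h

lemma log_sub_inv_le_logDeriv_Gamma {t : ℝ} (ht : 0 < t) :
    log t - t⁻¹ ≤ logDeriv Gamma t := by
  have ht1 : 0 < t + 1 := by linarith
  have h := convexOn_log_Gamma.slope_le_deriv ht ht1 (lt_add_one t)
    (differentiableAt_log_Gamma_s19 ht1)
  rw [deriv_log_Gamma ht1, slope_def_field, add_sub_cancel_left, div_one, Function.comp_apply,
    Function.comp_apply, log_Gamma_add_one_sub_log_Gamma ht, logDeriv_Gamma_add_one ht] at h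
  linarith

lemma abs_logDeriv_Gamma_le {t : ℝ} (ht : 0 < t) : |logDeriv Gamma t| ≤ |log t| + t⁻¹ := by
  have hlower := log_sub_inv_le_logDeriv_Gamma ht
  have hupper := logDeriv_Gamma_le_log ht
  have hinv := inv_pos.2 ht
  exact abs_le.2 ⟨by linarith [neg_abs_le (log t)], by linarith [le_abs_self (log t)]⟩

lemma abs_deriv_Gamma_eq {t : ℝ} (ht : 0 < t) :
    |deriv Gamma t| = Gamma t * |logDeriv Gamma t| := by
  rw [logDeriv_apply, abs_div, abs_of_pos (Gamma_pos_of_pos ht),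
    mul_div_cancel₀ _ (Gamma_pos_of_pos ht).ne']

end Real

lemma abs_logDeriv_Gamma_le_log_one_add {d t : ℝ} (hd : 1 ≤ d)
    (ht : t ∈ Icc (d / 2) (d / 2 + 1)) : |logDeriv Gamma t| ≤ 4 * log (1 + d) := by
  have ht0 : 0 < t := by linarith [ht.1]
  have hlog2 : log 2 ≤ log (1 + d) := log_le_log two_pos (by linarith)
  have hlog_le : log t ≤ log (1 + d) := log_le_log ht0 (by linarith [ht.2])
  have hinv : t⁻¹ ≤ 2 := inv_le_of_inv_le₀ two_pos (by linarith [ht.1])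
  have hneg_log_le : -log t ≤ log 2 := by
    rw [← log_inv]
    exact log_le_log (inv_pos.2 ht0) hinv
  have := log_two_gt_d9
  refine (abs_logDeriv_Gamma_le ht0).trans ?_
  cases abs_cases (log t) <;> linarith

lemma abs_deriv_Gamma_le_two {t : ℝ} (ht : t ∈ Icc 1 2) : |deriv Gamma t| ≤ 2 := by
  have ht0 : 0 < t := by linarith [ht.1]
  have hlog : |log t| ≤ 1 := by
    rw [abs_of_nonneg (log_nonneg ht.1)]
    linarith [log_le_log ht0 ht.2, log_two_lt_d9]
  have hinv : t⁻¹ ≤ 1 := inv_le_one_of_one_le₀ ht.1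
  rw [abs_deriv_Gamma_eq ht0]
  calc Gamma t * |logDeriv Gamma t| ≤ 1 * (1 + 1) :=
        mul_le_mul (Gamma_le_one_of_mem_Icc ht)
          ((abs_logDeriv_Gamma_le ht0).trans (add_le_add hlog hinv)) (abs_nonneg _) zero_le_one
    _ = 2 := by norm_num

noncomputable def rho (d x : ℝ) : ℝ :=
  x * Gamma ((d + x) / 2) - d * (2 : ℝ) ^ (2 - x) * Gamma (2 - x / 2) * Gamma (d / 2)

lemma hasDerivAt_rho {d x : ℝ} (hz : 0 < d + x) (hw : x < 4) :
    HasDerivAt (rho d)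
      (Gamma ((d + x) / 2) + x / 2 * deriv Gamma ((d + x) / 2) + d * Gamma (d / 2) *
        (2 : ℝ) ^ (2 - x) * (log 2 * Gamma (2 - x / 2) + deriv Gamma (2 - x / 2) / 2)) x := by
  have hΓz : HasDerivAt (fun y => Gamma ((d + y) / 2)) (deriv Gamma ((d + x) / 2) * (1 / 2)) x :=
    (differentiableAt_Gamma_of_pos (by linarith)).hasDerivAt.comp x
      (((hasDerivAt_id x).const_add d).div_const 2)
  have hΓw : HasDerivAt (fun y => Gamma (2 - y / 2)) (deriv Gamma (2 - x / 2) * -(1 / 2)) x :=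
    (differentiableAt_Gamma_of_pos (by linarith)).hasDerivAt.comp x
      (((hasDerivAt_id x).div_const 2).const_sub 2)
  have hpow : HasDerivAt (fun y => (2 : ℝ) ^ (2 - y)) ((2 : ℝ) ^ (2 - x) * log 2 * -1) x :=
    (hasStrictDerivAt_const_rpow two_pos (2 - x)).hasDerivAt.comp x
      ((hasDerivAt_id x).const_sub 2)
  exact (((hasDerivAt_id' x).fun_mul hΓz).fun_sub
    (((hpow.const_mul d).fun_mul hΓw).mul_const (Gamma (d / 2)))).congr_deriv (by ring)

lemma abs_deriv_rho_le {d x : ℝ} (hd : 1 ≤ d) (hx : x ∈ Icc 0 2) :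
    |deriv (rho d) x| ≤ 22 * d * Gamma (d / 2) * log (1 + d) := by
  obtain ⟨hx0, hx2⟩ := hx
  rw [(hasDerivAt_rho (by linarith) (by linarith)).deriv]
  have hz : (d + x) / 2 ∈ Icc (d / 2) (d / 2 + 1) := ⟨by linarith, by linarith⟩
  have hw : 2 - x / 2 ∈ Icc 1 2 := ⟨by linarith, by linarith⟩
  set z := (d + x) / 2
  set w := 2 - x / 2
  set M := d * Gamma (d / 2)
  set L := log (1 + d)
  have hM : 0 < M := mul_pos (by linarith) (Gamma_pos_of_pos (by linarith))
  have hL : 1 / 2 ≤ L := by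
    linarith [log_le_log two_pos (by linarith : (2 : ℝ) ≤ 1 + d), log_two_gt_d9]
  have hΓz : Gamma z ≤ M := Gamma_le_mul_Gamma_half hd hz
  have hΓ'z : |deriv Gamma z| ≤ M * (4 * L) := by
    rw [abs_deriv_Gamma_eq (by linarith [hz.1])]
    exact mul_le_mul hΓz (abs_logDeriv_Gamma_le_log_one_add hd hz) (abs_nonneg _) hM.le
  have hpow : (2 : ℝ) ^ (2 - x) ≤ 4 := by
    have h := rpow_le_rpow_of_exponent_le one_le_two (by linarith : 2 - x ≤ 2)
    norm_num at h
    exact h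
  have hw_term : |log 2 * Gamma w + deriv Gamma w / 2| ≤ 2 := by
    have hΓw := Gamma_le_one_of_mem_Icc hw
    have hΓw_pos := Gamma_pos_of_pos (by linarith [hw.1] : 0 < w)
    have hΓ'w := abs_le.1 (abs_deriv_Gamma_le_two hw)
    rw [abs_le]
    constructor <;> nlinarith [log_two_lt_d9, log_two_gt_d9]
  have h1 : |Gamma z| ≤ M := by
    rwa [abs_of_pos (Gamma_pos_of_pos (by linarith [hz.1]))]
  have h2 : |x / 2 * deriv Gamma z| ≤ M * (4 * L) := by
    rw [abs_mul, abs_of_nonneg (by linarith : 0 ≤ x / 2)]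
    nlinarith [abs_nonneg (deriv Gamma z)]
  have h3 : |M * (2 : ℝ) ^ (2 - x) * (log 2 * Gamma w + deriv Gamma w / 2)| ≤ M * 4 * 2 := by
    rw [abs_mul, abs_mul, abs_of_pos hM, abs_of_pos (by positivity)]
    gcongr
  calc _ ≤ |Gamma z| + |x / 2 * deriv Gamma z|
        + |M * (2 : ℝ) ^ (2 - x) * (log 2 * Gamma w + deriv Gamma w / 2)| := abs_add_three _ _ _
    _ ≤ M + M * (4 * L) + M * 4 * 2 := by gcongr
    _ ≤ 22 * M * L := by nlinarith
    _ = 22 * d * Gamma (d / 2) * L := by ring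

/-- The derivative of ρ(x) = x·Γ((d+x)/2) − d·2^{2−x}·Γ(2−x/2)·Γ(d/2) satisfies
|ρ'(x)| ≤ C·d·Γ(d/2)·log(1+d) on [0,2], with C independent of d. -/
theorem stmt_19 :
    ∃ C : ℝ, 0 < C ∧ ∀ (d : ℕ), 1 ≤ d → ∀ x ∈ Set.Icc (0:ℝ) 2,
      |deriv (fun y : ℝ => y * Real.Gamma (((d:ℝ) + y)/2)
          - (d:ℝ) * (2:ℝ) ^ (2 - y) * Real.Gamma (2 - y/2) * Real.Gamma ((d:ℝ)/2)) x|
        ≤ C * (d:ℝ) * Real.Gamma ((d:ℝ)/2) * Real.log (1 + (d:ℝ)) :=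
  ⟨22, by norm_num, fun _ hd _ hx => abs_deriv_rho_le (by exact_mod_cast hd) hx⟩
end
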